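/- Let X be a Banach space and G: X × X → X a bilinear map with ‖G(u,v)‖ ≤ N₀ ‖u‖ ‖v‖ for some N₀ > 0 and all u, v ∈ X. Then for every u₀ ∈ X with 4 N₀ ‖u₀‖ < 1, the equation u = u₀ + G(u,u) has a solution u ∈ X satisfying ‖u‖ ≤ 2‖u₀‖, and this solution is unique in the ball {u : ‖u‖ ≤ 2‖u₀‖}. -/

import Mathlib

/-!
The map `Φ u = u₀ + G(u,u)` is a contraction of the closed ball of radius `R = 2‖u₀‖`:
`Φ u - Φ v = G(u, u - v) + G(u - v, v)` gives the Lipschitz constant `2 N₀ R = 4 N₀ ‖u₀‖ < 1`,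
and `‖Φ u‖ ≤ ‖u₀‖ + N₀ R² ≤ R`. The Banach fixed-point theorem then gives existence and
uniqueness in the ball.
-/

open Set Metric NNReal Function

theorem exists_unique_isFixedPt_of_lipschitzOnWith {α : Type*} [MetricSpace α] {f : α → α}
    {s : Set α} (hsc : IsComplete s) (hne : s.Nonempty) (hsf : MapsTo f s s) {K : ℝ≥0}
    (hK : K < 1) (hf : LipschitzOnWith K f s) :
    ∃ x ∈ s, IsFixedPt f x ∧ ∀ y ∈ s, IsFixedPt f y → y = x := by
  have hc : ContractingWith K (hsf.restrict f s s) := ⟨hK, hf.mapsToRestrict hsf⟩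
  have : CompleteSpace s := hsc.completeSpace_coe
  have : Nonempty s := hne.to_subtype
  set x := ContractingWith.fixedPoint _ hc
  refine ⟨x, x.2, congrArg Subtype.val hc.fixedPoint_isFixedPt, fun y hy hfy => ?_⟩
  exact congrArg Subtype.val (hc.fixedPoint_unique (x := ⟨y, hy⟩) (Subtype.ext hfy))

section Biadditive

variable {X : Type*} [NormedAddCommGroup X] {G : X → X → X}

theorem sub_eq_add_of_biadditive (hadd₁ : ∀ a b c : X, G (a + b) c = G a c + G b c)
    (hadd₂ : ∀ a b c : X, G a (b + c) = G a b + G a c) (u v : X) :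
    G u u - G v v = G u (u - v) + G (u - v) v := by
  have h₁ : G (u - v) v = G u v - G v v := map_sub (AddMonoidHom.mk' (G · v) (hadd₁ · · v)) u v
  have h₂ : G u (u - v) = G u u - G u v := map_sub (AddMonoidHom.mk' (G u) (hadd₂ u)) u v
  rw [h₁, h₂]
  abel

variable {N₀ : ℝ} {R : ℝ}

theorem mapsTo_closedBall_of_biadditive (hN₀ : 0 ≤ N₀)
    (hG : ∀ u v : X, ‖G u v‖ ≤ N₀ * ‖u‖ * ‖v‖) (u₀ : X) (hR : ‖u₀‖ + N₀ * R ^ 2 ≤ R) :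
    MapsTo (fun u => u₀ + G u u) (closedBall 0 R) (closedBall 0 R) := by
  intro u hu
  rw [mem_closedBall_zero_iff] at hu ⊢
  calc ‖u₀ + G u u‖ ≤ ‖u₀‖ + N₀ * ‖u‖ * ‖u‖ := (norm_add_le _ _).trans (by gcongr; exact hG u u)
    _ ≤ ‖u₀‖ + N₀ * R ^ 2 := by
      rw [sq, mul_assoc]
      gcongr ‖u₀‖ + N₀ * ?_
      exact mul_self_le_mul_self (norm_nonneg u) hu
    _ ≤ R := hR

theorem lipschitzOnWith_closedBall_of_biadditive
    (hadd₁ : ∀ a b c : X, G (a + b) c = G a c + G b c)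
    (hadd₂ : ∀ a b c : X, G a (b + c) = G a b + G a c) (hN₀ : 0 ≤ N₀)
    (hG : ∀ u v : X, ‖G u v‖ ≤ N₀ * ‖u‖ * ‖v‖) (u₀ : X) :
    LipschitzOnWith (2 * N₀ * R).toNNReal (fun u => u₀ + G u u) (closedBall 0 R) := by
  refine LipschitzOnWith.of_dist_le_mul fun u hu v hv => ?_
  rw [mem_closedBall_zero_iff] at hu hv
  rw [dist_eq_norm, dist_eq_norm, add_sub_add_left_eq_sub, sub_eq_add_of_biadditive hadd₁ hadd₂]
  calc ‖G u (u - v) + G (u - v) v‖ ≤ N₀ * ‖u‖ * ‖u - v‖ + N₀ * ‖u - v‖ * ‖v‖ :=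
        (norm_add_le _ _).trans (add_le_add (hG _ _) (hG _ _))
    _ ≤ N₀ * R * ‖u - v‖ + N₀ * ‖u - v‖ * R := by gcongr
    _ = 2 * N₀ * R * ‖u - v‖ := by ring
    _ ≤ (2 * N₀ * R).toNNReal * ‖u - v‖ := by gcongr; exact Real.le_coe_toNNReal _

end Biadditive

theorem bilinear_fixed_point_general
    (X : Type*) [NormedAddCommGroup X] [CompleteSpace X]
    (G : X → X → X)
    (hadd₁ : ∀ a b c : X, G (a + b) c = G a c + G b c)
    (hadd₂ : ∀ a b c : X, G a (b + c) = G a b + G a c)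
    (N₀ : ℝ) (hN₀ : 0 < N₀) (hG : ∀ u v : X, ‖G u v‖ ≤ N₀ * ‖u‖ * ‖v‖)
    (u₀ : X) (hu₀ : 4 * N₀ * ‖u₀‖ < 1) :
    ∃ u : X, u = u₀ + G u u ∧ ‖u‖ ≤ 2 * ‖u₀‖ ∧
      ∀ v : X, v = u₀ + G v v → ‖v‖ ≤ 2 * ‖u₀‖ → v = u := by
  have hball : ‖u₀‖ + N₀ * (2 * ‖u₀‖) ^ 2 ≤ 2 * ‖u₀‖ := by
    nlinarith [norm_nonneg u₀]
  have hK : (2 * N₀ * (2 * ‖u₀‖)).toNNReal < 1 := Real.toNNReal_lt_one.mpr (by linarith)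
  obtain ⟨u, hu, hfix, huniq⟩ := exists_unique_isFixedPt_of_lipschitzOnWith
    isClosed_closedBall.isComplete ⟨0, mem_closedBall_self (by positivity)⟩
    (mapsTo_closedBall_of_biadditive hN₀.le hG u₀ hball) hK
    (lipschitzOnWith_closedBall_of_biadditive hadd₁ hadd₂ hN₀.le hG u₀)
  exact ⟨u, hfix.symm, mem_closedBall_zero_iff.mp hu,
    fun v hv hvR => huniq v (mem_closedBall_zero_iff.mpr hvR) hv.symm⟩

/-- **Abstract bilinear fixed-point lemma.** If `G : X × X → X` is bilinear on a Banach
space `X` with `‖G(u,v)‖ ≤ N₀ ‖u‖ ‖v‖`, then for every `u₀` with `4 N₀ ‖u₀‖ < 1`, the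
equation `u = u₀ + G(u,u)` has a solution with `‖u‖ ≤ 2‖u₀‖`, unique in the ball
`{u : ‖u‖ ≤ 2‖u₀‖}`. -/
theorem bilinear_fixed_point
    (X : Type*) [NormedAddCommGroup X] [NormedSpace ℝ X] [CompleteSpace X]
    (G : X → X → X)
    (hadd₁ : ∀ a b c : X, G (a + b) c = G a c + G b c)
    (hsmul₁ : ∀ (r : ℝ) (a b : X), G (r • a) b = r • G a b)
    (hadd₂ : ∀ a b c : X, G a (b + c) = G a b + G a c)
    (hsmul₂ : ∀ (r : ℝ) (a b : X), G a (r • b) = r • G a b)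
    (N₀ : ℝ) (hN₀ : 0 < N₀) (hG : ∀ u v : X, ‖G u v‖ ≤ N₀ * ‖u‖ * ‖v‖)
    (u₀ : X) (hu₀ : 4 * N₀ * ‖u₀‖ < 1) :
    ∃ u : X, u = u₀ + G u u ∧ ‖u‖ ≤ 2 * ‖u₀‖ ∧
      ∀ v : X, v = u₀ + G v v → ‖v‖ ≤ 2 * ‖u₀‖ → v = u :=
  bilinear_fixed_point_general X G hadd₁ hadd₂ N₀ hN₀ hG u₀ hu₀
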